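/- arXiv:2109.13595 — 5 statements merged into one kernel-verified Lean document; each statement's English description precedes it below -/
import Mathlib

section
/- In a one-dimensional natural exponential family with inf Θ = -∞, the condition lim_{θ→-∞} (θA'(θ) - A(θ)) = ∞ holds if and only if for every fixed θ₁ > θ₂ in Θ, inf_{θ < θ₂} D(θ,θ₁)/D(θ,θ₂) = 1. -/
open Filter Set

private lemma abs_aux {ℓ x y c : ℝ} (h1 : ℓ ≤ x) (h2 : x ≤ y) :
    |c * x| ≤ |c| * (|ℓ| + |y|) := by
  have ha1 : |x| ≤ |ℓ| + |y| := by
    rw [abs_le]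
    constructor
    · have := neg_abs_le ℓ; have := abs_nonneg y; linarith
    · have := le_abs_self y; have := abs_nonneg ℓ; linarith
  calc |c * x| = |c| * |x| := abs_mul _ _
    _ ≤ |c| * (|ℓ| + |y|) := mul_le_mul_of_nonneg_left ha1 (abs_nonneg _)

/-- In a one-dimensional natural exponential family whose parameter set `Θ` is
unbounded below (`inf Θ = -∞`), with log-partition function `A` having derivative
`A'` (strictly increasing on `Θ`) and KL divergence
`D θ θ' = A θ' - A θ - A' θ * (θ' - θ)`, the condition
`lim_{θ → -∞} (θ * A' θ - A θ) = ∞` holds if and only if for every `θ₁ > θ₂` in `Θ`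
the infimum over `θ ∈ Θ` with `θ < θ₂` of `D θ θ₁ / D θ θ₂` equals `1`. -/
theorem tendsto_conj_atTop_iff_kl_ratio_inf_eq_one
    (Θ : Set ℝ) (hΘopen : IsOpen Θ) (hΘ : Θ.OrdConnected) (hbot : ¬ BddBelow Θ)
    (A A' : ℝ → ℝ) (hA : ∀ θ ∈ Θ, HasDerivAt A (A' θ) θ)
    (hmono : StrictMonoOn A' Θ)
    (D : ℝ → ℝ → ℝ)
    (hD : ∀ a b, D a b = A b - A a - A' a * (b - a)) :
    Filter.Tendsto (fun θ => θ * A' θ - A θ) Filter.atBot Filter.atTop ↔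
      ∀ θ₁ ∈ Θ, ∀ θ₂ ∈ Θ, θ₂ < θ₁ →
        sInf ((fun θ => D θ θ₁ / D θ θ₂) '' {θ | θ ∈ Θ ∧ θ < θ₂}) = 1 := by
  classical
  have hne : Θ.Nonempty := by
    rcases Set.eq_empty_or_nonempty Θ with h | h
    · exact absurd (h ▸ bddBelow_empty) hbot
    · exact h
  obtain ⟨a0, ha0⟩ := hne
  have hsub : ∀ a ∈ Θ, Set.Iic a ⊆ Θ := by
    intro a ha x hx
    obtain ⟨c, hc, hcx⟩ := not_bddBelow_iff.mp hbot x
    exact hΘ.out hc ha ⟨hcx.le, hx⟩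
  have key : ∀ x ∈ Θ, ∀ y ∈ Θ, x < y → A' x * (y - x) < A y - A x := by
    intro x hx y hy hxy
    have hIcc : Set.Icc x y ⊆ Θ := hΘ.out hx hy
    have hcont : ContinuousOn A (Set.Icc x y) := fun t ht =>
      (hA t (hIcc ht)).continuousAt.continuousWithinAt
    obtain ⟨c, hc, hc'⟩ := exists_hasDerivAt_eq_slope A A' hxy hcont
      (fun t ht => hA t (hIcc (Set.mem_Icc_of_Ioo ht)))
    have hcΘ : c ∈ Θ := hIcc ⟨hc.1.le, hc.2.le⟩
    have h1 : A' x < A' c := hmono hx hcΘ hc.1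
    have h2 : A y - A x = A' c * (y - x) := by
      rw [hc', div_mul_cancel₀ _ (sub_ne_zero.mpr hxy.ne')]
    rw [h2]
    exact mul_lt_mul_of_pos_right h1 (sub_pos.mpr hxy)
  have Dpos : ∀ x ∈ Θ, ∀ y ∈ Θ, x < y → 0 < D x y := by
    intro x hx y hy hxy
    rw [hD]; linarith [key x hx y hy hxy]
  constructor
  · -- forward direction
    intro h θ₁ hθ₁ θ₂ hθ₂ h21
    have hΔ : 0 < θ₁ - θ₂ := sub_pos.mpr h21
    have hmem : ∀ θ ∈ Θ, θ < θ₂ →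
        D θ θ₁ / D θ θ₂ ∈ (fun θ => D θ θ₁ / D θ θ₂) '' {θ | θ ∈ Θ ∧ θ < θ₂} :=
      fun θ hθ hlt => ⟨θ, ⟨hθ, hlt⟩, rfl⟩
    have hθ₂1 : (θ₂ - 1 : ℝ) ∈ Θ := hsub θ₂ hθ₂ (by norm_num)
    have hne' : ((fun θ => D θ θ₁ / D θ θ₂) '' {θ | θ ∈ Θ ∧ θ < θ₂}).Nonempty :=
      ⟨_, hmem (θ₂ - 1) hθ₂1 (by linarith)⟩
    have hDlt : ∀ θ ∈ Θ, θ < θ₂ → D θ θ₂ < D θ θ₁ := by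
      intro θ hθ hlt
      have h1 := key θ₂ hθ₂ θ₁ hθ₁ h21
      have h2 : A' θ < A' θ₂ := hmono hθ hθ₂ hlt
      rw [hD, hD]
      nlinarith
    have hlb : ∀ x ∈ (fun θ => D θ θ₁ / D θ θ₂) '' {θ | θ ∈ Θ ∧ θ < θ₂}, 1 ≤ x := by
      rintro x ⟨θ, ⟨hθ, hlt⟩, rfl⟩
      exact le_of_lt ((one_lt_div (Dpos θ hθ θ₂ hθ₂ hlt)).mpr (hDlt θ hθ hlt))
    refine le_antisymm ?_ (le_csInf hne' hlb)
    refine le_of_forall_pos_le_add ?_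
    intro ε hε
    suffices hex : ∃ x ∈ (fun θ => D θ θ₁ / D θ θ₂) '' {θ | θ ∈ Θ ∧ θ < θ₂}, x ≤ 1 + ε by
      obtain ⟨x, hx, hxle⟩ := hex
      exact (csInf_le ⟨1, hlb⟩ hx).trans hxle
    by_cases hbb : ∃ ℓ, ∀ θ < θ₂, ℓ ≤ A' θ
    · obtain ⟨ℓ, hℓ⟩ := hbb
      have hℓ2 : ℓ < A' θ₂ := by
        have h1 := hℓ (θ₂ - 1) (by linarith)
        have h2 : A' (θ₂ - 1) < A' θ₂ := hmono hθ₂1 hθ₂ (by linarith)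
        linarith
      set N := (A θ₁ - A θ₂) - ℓ * (θ₁ - θ₂) with hNdef
      have hN0 : 0 < N := by
        have h1 := key θ₂ hθ₂ θ₁ hθ₁ h21
        nlinarith
      obtain ⟨θ, hBθ, hθlt⟩ := ((h.eventually_ge_atTop
        (N / ε + |θ₂| * (|ℓ| + |A' θ₂|) - A θ₂)).and (eventually_lt_atBot θ₂)).exists
      have hθΘ : θ ∈ Θ := hsub θ₂ hθ₂ hθlt.le
      have hdpos := Dpos θ hθΘ θ₂ hθ₂ hθlt
      have habs : |θ₂ * A' θ| ≤ |θ₂| * (|ℓ| + |A' θ₂|) :=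
        abs_aux (hℓ θ hθlt) (hmono hθΘ hθ₂ hθlt).le
      have hdlow : N / ε ≤ D θ θ₂ := by
        rw [hD]
        have : A θ₂ - A θ - A' θ * (θ₂ - θ)
            = A θ₂ + (θ * A' θ - A θ) + -(θ₂ * A' θ) := by ring
        rw [this]
        linarith [le_abs_self (θ₂ * A' θ)]
      have hn : D θ θ₁ - D θ θ₂ ≤ N := by
        rw [hD, hD]
        have h1 := hℓ θ hθlt
        nlinarith
      refine ⟨_, hmem θ hθΘ hθlt, ?_⟩
      rw [div_le_iff₀ hdpos]
      have h3 : ε * (N / ε) ≤ ε * D θ θ₂ := mul_le_mul_of_nonneg_left hdlow hε.le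
      have h4 : ε * (N / ε) = N := mul_div_cancel₀ N hε.ne'
      nlinarith
    · push_neg at hbb
      set s := θ₂ - 2 * (θ₁ - θ₂) / ε - 1 with hsdef
      have hspos : 0 < 2 * (θ₁ - θ₂) / ε := by positivity
      have hsθ₂ : s < θ₂ := by rw [hsdef]; linarith
      have hsΘ : s ∈ Θ := hsub θ₂ hθ₂ hsθ₂.le
      set u : ℝ := ((A θ₁ - A θ₂) + ε * (A s - A θ₂)) / (θ₁ - θ₂) with hudef
      obtain ⟨θ, hθlt, hθA'⟩ := hbb (min (min (-u) (A' s)) 0)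
      have hθΘ : θ ∈ Θ := hsub θ₂ hθ₂ hθlt.le
      have hu1 : A' θ < -u :=
        lt_of_lt_of_le hθA' ((min_le_left _ _).trans (min_le_left _ _))
      have hu2 : A' θ < A' s :=
        lt_of_lt_of_le hθA' ((min_le_left _ _).trans (min_le_right _ _))
      have hu0 : A' θ < 0 := lt_of_lt_of_le hθA' (min_le_right _ _)
      have hθs : θ < s := by
        by_contra hge
        push_neg at hge
        rcases eq_or_lt_of_le hge with h' | h'
        · rw [← h'] at hu2; exact lt_irrefl _ hu2
        · exact absurd (hmono hsΘ hθΘ h') (by linarith)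
      have hDθs := Dpos θ hθΘ s hsΘ hθs
      rw [hD] at hDθs
      have hdpos := Dpos θ hθΘ θ₂ hθ₂ hθlt
      refine ⟨_, hmem θ hθΘ hθlt, ?_⟩
      rw [div_le_iff₀ hdpos]
      rw [hD, hD]
      have hes : ε * (θ₂ - s) = 2 * (θ₁ - θ₂) + ε := by
        rw [hsdef]; field_simp; ring
      have hustar : u * (θ₁ - θ₂) = (A θ₁ - A θ₂) + ε * (A s - A θ₂) := by
        rw [hudef]; field_simp
      have h5 : ε * ((-A' θ) * (θ₂ - s)) = (-A' θ) * (2 * (θ₁ - θ₂) + ε) := by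
        linear_combination (-A' θ) * hes
      have h6 : (A θ₁ - A θ₂) + ε * (A s - A θ₂) < (-A' θ) * (θ₁ - θ₂) := by
        nlinarith [mul_pos (by linarith : (0:ℝ) < -u - A' θ) hΔ]
      have hP : 0 < ε * (A s - A θ - A' θ * (s - θ)) := mul_pos hε hDθs
      have h7 : 0 < (-A' θ) * (θ₁ - θ₂) := mul_pos (by linarith) hΔ
      have h8 : 0 < (-A' θ) * ε := mul_pos (by linarith) hε
      nlinarith [hP, h5, h6, h7, h8]
  · -- reverse direction
    intro hinf
    by_contra hT
    set t₀ := min a0 0 - 1 with ht₀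
    have ht₀Θ : t₀ ∈ Θ := hsub a0 ha0 (by
      have := min_le_left a0 0; simp only [ht₀, Set.mem_Iic]; linarith)
    have ht₀neg : t₀ < 0 := by
      have := min_le_right a0 0; rw [ht₀]; linarith
    have anti : ∀ θ θ', θ < θ' → θ' ≤ t₀ → θ' * A' θ' - A θ' < θ * A' θ - A θ := by
      intro θ θ' hlt hle
      have hθΘ : θ ∈ Θ := hsub t₀ ht₀Θ (by simp only [Set.mem_Iic]; linarith)
      have hθ'Θ : θ' ∈ Θ := hsub t₀ ht₀Θ hle
      have h1 := key θ hθΘ θ' hθ'Θ hlt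
      have h2 := hmono hθΘ hθ'Θ hlt
      nlinarith
    have hM : ∃ M, ∀ θ ≤ t₀, θ * A' θ - A θ ≤ M := by
      by_contra hc
      push_neg at hc
      apply hT
      rw [Filter.tendsto_atTop]
      intro b
      obtain ⟨θ₃, hθ₃, hb⟩ := hc b
      filter_upwards [Filter.eventually_le_atBot θ₃] with θ hθ
      rcases eq_or_lt_of_le hθ with rfl | hlt
      · exact hb.le
      · exact (lt_trans hb (anti θ θ₃ hlt hθ₃)).le
    obtain ⟨M, hM⟩ := hM
    set θ₂ := t₀ - 1 with hθ₂def
    have hθ₂Θ : θ₂ ∈ Θ := hsub t₀ ht₀Θ (by simp [hθ₂def])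
    have hℓ : ∃ ℓ, ∀ θ < θ₂, ℓ ≤ A' θ := by
      by_contra hc
      push_neg at hc
      obtain ⟨θ, hθlt, hθA'⟩ := hc ((M + A t₀) / t₀)
      have hθΘ : θ ∈ Θ := hsub θ₂ hθ₂Θ hθlt.le
      have hDp := Dpos θ hθΘ t₀ ht₀Θ (by rw [hθ₂def] at hθlt; linarith)
      rw [hD] at hDp
      have hBle := hM θ (by rw [hθ₂def] at hθlt; linarith)
      have hmul : M + A t₀ < t₀ * A' θ := by
        have := (lt_div_iff_of_neg ht₀neg).mp hθA'
        linarith [mul_comm t₀ (A' θ), this]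
      nlinarith
    obtain ⟨ℓ, hℓ⟩ := hℓ
    have hkey2 := key θ₂ hθ₂Θ t₀ ht₀Θ (by rw [hθ₂def]; linarith)
    set ν := (A t₀ - A θ₂) - A' θ₂ * (t₀ - θ₂) with hνdef
    have hν0 : 0 < ν := by rw [hνdef]; linarith
    set K := A θ₂ + M + |θ₂| * (|ℓ| + |A' θ₂|) with hKdef
    have hdK : ∀ θ ∈ Θ, θ < θ₂ → D θ θ₂ ≤ K := by
      intro θ hθ hlt
      have hB := hM θ (by rw [hθ₂def] at hlt; linarith)
      have habs : |θ₂ * A' θ| ≤ |θ₂| * (|ℓ| + |A' θ₂|) :=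
        abs_aux (hℓ θ hlt) (hmono hθ hθ₂Θ hlt).le
      rw [hD, hKdef]
      have : A θ₂ - A θ - A' θ * (θ₂ - θ)
          = A θ₂ + (θ * A' θ - A θ) + -(θ₂ * A' θ) := by ring
      rw [this]
      linarith [neg_le_abs (θ₂ * A' θ)]
    have hθ₂1 : (θ₂ - 1 : ℝ) ∈ Θ := hsub θ₂ hθ₂Θ (by norm_num)
    have hK0 : 0 < K :=
      lt_of_lt_of_le (Dpos (θ₂ - 1) hθ₂1 θ₂ hθ₂Θ (by linarith))
        (hdK (θ₂ - 1) hθ₂1 (by linarith))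
    have hlow : ∀ x ∈ (fun θ => D θ t₀ / D θ θ₂) '' {θ | θ ∈ Θ ∧ θ < θ₂},
        1 + ν / K ≤ x := by
      rintro x ⟨θ, ⟨hθ, hlt⟩, rfl⟩
      have hd := Dpos θ hθ θ₂ hθ₂Θ hlt
      have hdK' := hdK θ hθ hlt
      have hn : ν ≤ D θ t₀ - D θ θ₂ := by
        rw [hD, hD, hνdef]
        have h2 : A' θ < A' θ₂ := hmono hθ hθ₂Θ hlt
        have h3 : (0:ℝ) < t₀ - θ₂ := by rw [hθ₂def]; linarith
        nlinarith
      simp only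
      rw [le_div_iff₀ hd]
      have h9 : (ν / K) * D θ θ₂ ≤ (ν / K) * K :=
        mul_le_mul_of_nonneg_left hdK' (le_of_lt (div_pos hν0 hK0))
      have h10 : (ν / K) * K = ν := div_mul_cancel₀ ν hK0.ne'
      nlinarith
    have heq := hinf t₀ ht₀Θ θ₂ hθ₂Θ (by rw [hθ₂def]; linarith)
    have hne' : ((fun θ => D θ t₀ / D θ θ₂) '' {θ | θ ∈ Θ ∧ θ < θ₂}).Nonempty :=
      ⟨_, ⟨θ₂ - 1, ⟨hθ₂1, by linarith⟩, rfl⟩⟩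
    have h1 : 1 + ν / K ≤ sInf ((fun θ => D θ t₀ / D θ θ₂) '' {θ | θ ∈ Θ ∧ θ < θ₂}) :=
      le_csInf hne' hlow
    rw [heq] at h1
    have : 0 < ν / K := div_pos hν0 hK0
    linarith
end

section
/- If A is the log-partition function of a natural exponential family with inf Θ = -∞ and lim_{θ→-∞} A'(θ) = -∞, then lim_{θ→-∞} A*(A'(θ)) = ∞, where A* is the convex conjugate of A. -/
/-- Tangent line inequality for a function whose derivative is strictly monotone. -/
lemma tangent_le_aux (Θ : Set ℝ) (hΘopen : IsOpen Θ) (hΘ : Θ.OrdConnected)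
    (A A' : ℝ → ℝ) (hA : ∀ θ ∈ Θ, HasDerivAt A (A' θ) θ)
    (hmono : StrictMonoOn A' Θ) {θ η : ℝ} (hθ : θ ∈ Θ) (hη : η ∈ Θ) :
    (η - θ) * A' θ ≤ A η - A θ := by
  rcases lt_trichotomy η θ with h | h | h
  · -- MVT on [η, θ]
    have hsub : Set.Icc η θ ⊆ Θ := hΘ.out hη hθ
    have hcont : ContinuousOn A (Set.Icc η θ) := fun x hx =>
      ((hA x (hsub hx)).continuousAt).continuousWithinAt
    obtain ⟨c, hc, hcder⟩ := exists_hasDerivAt_eq_slope A A' h hcont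
      (fun x hx => hA x (hsub (Set.mem_Icc_of_Ioo hx)))
    have hcΘ : c ∈ Θ := hsub (Set.mem_Icc_of_Ioo hc)
    have h1 : A' c ≤ A' θ := le_of_lt (hmono hcΘ hθ hc.2)
    rw [eq_div_iff (by linarith : θ - η ≠ 0)] at hcder
    nlinarith [h1, hcder, hc.1, hc.2]
  · simp [h]
  · -- MVT on [θ, η]
    have hsub : Set.Icc θ η ⊆ Θ := hΘ.out hθ hη
    have hcont : ContinuousOn A (Set.Icc θ η) := fun x hx =>
      ((hA x (hsub hx)).continuousAt).continuousWithinAt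
    obtain ⟨c, hc, hcder⟩ := exists_hasDerivAt_eq_slope A A' h hcont
      (fun x hx => hA x (hsub (Set.mem_Icc_of_Ioo hx)))
    have hcΘ : c ∈ Θ := hsub (Set.mem_Icc_of_Ioo hc)
    have h1 : A' θ ≤ A' c := le_of_lt (hmono hθ hcΘ hc.1)
    rw [eq_div_iff (by linarith : η - θ ≠ 0)] at hcder
    nlinarith [h1, hcder, hc.1, hc.2]

/-- If `A` is the log-partition function of a natural exponential family whose
parameter set `Θ` is unbounded below, with derivative `A'` (strictly increasing on
`Θ`) satisfying `A'(θ) → -∞` as `θ → -∞`, then `A*(A'(θ)) → ∞` as `θ → -∞`,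
where `A* x = sup_{η ∈ Θ} (η * x - A η)` is the convex conjugate of `A`. -/
theorem tendsto_conjugate_comp_deriv_atTop
    (Θ : Set ℝ) (hΘopen : IsOpen Θ) (hΘ : Θ.OrdConnected) (hbot : ¬ BddBelow Θ)
    (A A' : ℝ → ℝ) (hA : ∀ θ ∈ Θ, HasDerivAt A (A' θ) θ)
    (hmono : StrictMonoOn A' Θ)
    (hA' : Filter.Tendsto A' Filter.atBot Filter.atBot)
    (Astar : ℝ → ℝ)
    (hconj : ∀ x, Astar x = sSup ((fun θ => θ * x - A θ) '' Θ)) :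
    Filter.Tendsto (fun θ => Astar (A' θ)) Filter.atBot Filter.atTop := by
  rw [not_bddBelow_iff] at hbot
  obtain ⟨η₀, hη₀Θ, hη₀neg⟩ := hbot 0
  -- eventually θ ∈ Θ
  have hev : ∀ᶠ θ in Filter.atBot, θ ∈ Θ := by
    rw [Filter.eventually_atBot]
    refine ⟨η₀, fun θ hθ => ?_⟩
    obtain ⟨b, hbΘ, hb⟩ := hbot θ
    exact hΘ.out hbΘ hη₀Θ ⟨hb.le, hθ⟩
  -- lower bound
  have hlow : ∀ᶠ θ in Filter.atBot, η₀ * A' θ - A η₀ ≤ Astar (A' θ) := by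
    filter_upwards [hev] with θ hθ
    rw [hconj]
    apply le_csSup
    · refine ⟨θ * A' θ - A θ, ?_⟩
      rintro _ ⟨η, hη, rfl⟩
      have := tangent_le_aux Θ hΘopen hΘ A A' hA hmono hθ hη
      simp only
      nlinarith
    · exact ⟨η₀, hη₀Θ, rfl⟩
  refine Filter.tendsto_atTop_mono' _ hlow ?_
  have : Filter.Tendsto (fun θ => η₀ * A' θ) Filter.atBot Filter.atTop :=
    Filter.Tendsto.const_mul_atBot_of_neg hη₀neg hA'
  have h2 := Filter.tendsto_atTop_add_const_right Filter.atBot (-A η₀) this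
  simpa [sub_eq_add_neg] using h2
end

section
/- Let X be a real random variable with A(θ) = log E[exp(θX)] finite for all θ ≤ 0, with ess inf X = L > -∞ and P(X = L) > 0. Then limsup_{l↓L} A*(l) ≤ -log P(X = L) < ∞, where A* is the convex conjugate of A; consequently A*(A'(θ)) stays bounded as θ → -∞. -/
/-!
The atom alone gives `E[exp (θ X)] ≥ exp (θ L) P(X = L)`, i.e. `A θ ≥ θ L + log P(X = L)`.
Hence for `θ ≤ 0 ≤ l - L` every candidate `θ l - A θ` of the supremum defining `A* l` is at most
`θ (l - L) - log P(X = L) ≤ - log P(X = L)`, while the candidate `θ = 0` bounds `A* l` below by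
`- A 0`, which makes the `limsup` well defined.
-/

open MeasureTheory Filter Set

theorem measureReal_eq_mul_le_integral {Ω : Type*} [MeasurableSpace Ω] {μ : Measure Ω}
    {X : Ω → ℝ} (hX : Measurable X) {f : ℝ → ℝ} (hf : ∀ x, 0 ≤ f x)
    (hint : Integrable (fun ω => f (X ω)) μ) (a : ℝ) :
    μ.real {ω | X ω = a} * f a ≤ ∫ ω, f (X ω) ∂μ := by
  have hs : MeasurableSet {ω | X ω = a} := hX (measurableSet_singleton a)
  calc μ.real {ω | X ω = a} * f a = ∫ ω in {ω | X ω = a}, f (X ω) ∂μ := by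
        rw [setIntegral_congr_fun hs fun ω (hω : X ω = a) => by rw [hω], setIntegral_const,
          smul_eq_mul]
    _ ≤ ∫ ω, f (X ω) ∂μ := setIntegral_le_integral hint (Eventually.of_forall fun ω => hf _)

theorem mul_add_log_measureReal_le_log_integral_exp {Ω : Type*} [MeasurableSpace Ω]
    {μ : Measure Ω} {X : Ω → ℝ} (hX : Measurable X) {L : ℝ} (hatom : 0 < μ.real {ω | X ω = L})
    {θ : ℝ} (hint : Integrable (fun ω => Real.exp (θ * X ω)) μ) :
    θ * L + Real.log (μ.real {ω | X ω = L}) ≤ Real.log (∫ ω, Real.exp (θ * X ω) ∂μ) := by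
  have hle := measureReal_eq_mul_le_integral hX (f := fun x => Real.exp (θ * x))
    (fun _ => (Real.exp_pos _).le) hint L
  calc θ * L + Real.log (μ.real {ω | X ω = L})
      = Real.log (μ.real {ω | X ω = L} * Real.exp (θ * L)) := by
        rw [Real.log_mul hatom.ne' (Real.exp_ne_zero _), Real.log_exp, add_comm]
    _ ≤ _ := Real.log_le_log (by positivity) hle

theorem sSup_mul_sub_mem_Icc_of_mul_add_le {A : ℝ → ℝ} {L c : ℝ}
    (hA : ∀ θ ≤ 0, θ * L + c ≤ A θ) {l : ℝ} (hl : L ≤ l) :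
    sSup {y | ∃ θ ≤ (0 : ℝ), y = θ * l - A θ} ∈ Icc (-A 0) (-c) := by
  have hzero : -A 0 ∈ {y | ∃ θ ≤ (0 : ℝ), y = θ * l - A θ} := ⟨0, le_rfl, by ring⟩
  have hle : ∀ y ∈ {y | ∃ θ ≤ (0 : ℝ), y = θ * l - A θ}, y ≤ -c := by
    rintro y ⟨θ, hθ, rfl⟩
    nlinarith [hA θ hθ]
  exact ⟨le_csSup ⟨-c, hle⟩ hzero, csSup_le ⟨_, hzero⟩ hle⟩

theorem limsup_rateFn_le_of_atom_general
    {Ω : Type*} [MeasurableSpace Ω] (μ : Measure Ω)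
    (X : Ω → ℝ) (hX : Measurable X) (L : ℝ)
    (hatom : 0 < (μ {ω | X ω = L}).toReal)
    (hint : ∀ θ : ℝ, θ ≤ 0 → Integrable (fun ω => Real.exp (θ * X ω)) μ)
    (A : ℝ → ℝ) (hA : ∀ θ, A θ = Real.log (∫ ω, Real.exp (θ * X ω) ∂μ))
    (Astar : ℝ → ℝ)
    (hAstar : ∀ l, Astar l = sSup {y | ∃ θ ≤ (0 : ℝ), y = θ * l - A θ}) :
    Filter.limsup Astar (nhdsWithin L (Set.Ioi L))
        ≤ - Real.log (μ {ω | X ω = L}).toReal ∧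
      ∃ l₀ > L, BddAbove (Astar '' Set.Ioo L l₀) := by
  have hA_ge : ∀ θ ≤ 0, θ * L + Real.log (μ {ω | X ω = L}).toReal ≤ A θ := fun θ hθ =>
    hA θ ▸ mul_add_log_measureReal_le_log_integral_exp hX hatom (hint θ hθ)
  have hAstar_mem : ∀ l, L ≤ l →
      Astar l ∈ Icc (-A 0) (-Real.log (μ {ω | X ω = L}).toReal) := fun l hl =>
    hAstar l ▸ sSup_mul_sub_mem_Icc_of_mul_add_le hA_ge hl
  have hev : ∀ᶠ l in nhdsWithin L (Ioi L),
      Astar l ∈ Icc (-A 0) (-Real.log (μ {ω | X ω = L}).toReal) :=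
    eventually_mem_nhdsWithin.mono fun l hl => hAstar_mem l (le_of_lt hl)
  refine ⟨limsup_le_of_le (isCoboundedUnder_le_of_eventually_le _ (hev.mono fun _ h => h.1))
    (hev.mono fun _ h => h.2), L + 1, by linarith, -Real.log (μ {ω | X ω = L}).toReal, ?_⟩
  rintro _ ⟨l, hl, rfl⟩
  exact (hAstar_mem l hl.1.le).2

/-- Let `X ≥ L` a.s. with an atom at the left endpoint `L` (`P(X = L) > 0`) and with
cumulant generating function `A θ = log E[exp (θ X)]` finite for all `θ ≤ 0`.
Then the Cramér rate function `A* l = sup_{θ ≤ 0} (θ l - A θ)` satisfies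
`limsup_{l ↓ L} A*(l) ≤ - log P(X = L)` (in particular it stays bounded above
near `L`, so `A*(A'(θ))` stays bounded as `θ → -∞`). -/
theorem limsup_rateFn_le_of_atom
    {Ω : Type*} [MeasurableSpace Ω] (μ : Measure Ω) [IsProbabilityMeasure μ]
    (X : Ω → ℝ) (hX : Measurable X) (L : ℝ)
    (hbound : ∀ᵐ ω ∂μ, L ≤ X ω)
    (hatom : 0 < (μ {ω | X ω = L}).toReal)
    (hint : ∀ θ : ℝ, θ ≤ 0 → Integrable (fun ω => Real.exp (θ * X ω)) μ)
    (A : ℝ → ℝ) (hA : ∀ θ, A θ = Real.log (∫ ω, Real.exp (θ * X ω) ∂μ))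
    (Astar : ℝ → ℝ)
    (hAstar : ∀ l, Astar l = sSup {y | ∃ θ ≤ (0 : ℝ), y = θ * l - A θ}) :
    Filter.limsup Astar (nhdsWithin L (Set.Ioi L))
        ≤ - Real.log (μ {ω | X ω = L}).toReal ∧
      ∃ l₀ > L, BddAbove (Astar '' Set.Ioo L l₀) :=
  limsup_rateFn_le_of_atom_general μ X hX L hatom hint A hA Astar hAstar
end

section
/- Let X be a continuous real random variable (atomless law) with ess inf X = L > -∞ and A(θ) = log E[exp(θX)] finite for all θ ≤ 0. Then lim_{l↓L} A*(l) = ∞, where A*(l) = sup_θ(θl - A(θ)) is the Cramér rate function. -/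
/-!
For `θ ≤ 0` and `l > L`, `θ l - A θ` is a lower bound for `A* l`, and it tends to
`θ L - A θ = -log E[exp (θ (X - L))]` as `l ↓ L`. Since `X > L` almost surely (no atom at `L`),
dominated convergence gives `E[exp (θ (X - L))] → 0` as `θ → -∞`, so these lower bounds are
eventually as large as we like. The Chernoff bound `P(X ≤ l) ≤ exp (-θ l + A θ)` shows that the
supremum defining `A* l` is finite as soon as `P(X ≤ l) > 0`, i.e. for every `l > L`.
-/

open MeasureTheory ProbabilityTheory Filter Topology Real

section

variable {Ω : Type*} [MeasurableSpace Ω] {μ : Measure Ω} {X : Ω → ℝ} {L θ : ℝ}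

lemma integrable_exp_mul_of_nonpos [IsFiniteMeasure μ] (hX : AEMeasurable X μ)
    (hL : ∀ᵐ ω ∂μ, L ≤ X ω) (hθ : θ ≤ 0) :
    Integrable (fun ω => exp (θ * X ω)) μ :=
  (integrable_const (exp (θ * L))).mono' (hX.const_mul θ).exp.aestronglyMeasurable <| by
    filter_upwards [hL] with ω hω
    rw [norm_of_nonneg (exp_pos _).le]
    exact exp_le_exp.2 (mul_le_mul_of_nonpos_left hω hθ)

lemma tendsto_mgf_atBot_of_pos [IsFiniteMeasure μ] (hX : AEMeasurable X μ)
    (hpos : ∀ᵐ ω ∂μ, 0 < X ω) :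
    Tendsto (mgf X μ) atBot (𝓝 0) := by
  have hlim : Tendsto (fun θ => ∫ ω, exp (θ * X ω) ∂μ) atBot (𝓝 (∫ _, (0 : ℝ) ∂μ)) := by
    refine tendsto_integral_filter_of_dominated_convergence (fun _ => 1)
      (Eventually.of_forall fun θ => (hX.const_mul θ).exp.aestronglyMeasurable) ?_
      (integrable_const _) ?_
    · filter_upwards [eventually_le_atBot 0] with θ hθ
      filter_upwards [hpos] with ω hω
      rw [norm_of_nonneg (exp_pos _).le]
      exact exp_le_one_iff.2 (mul_nonpos_of_nonpos_of_nonneg hθ hω.le)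
    · filter_upwards [hpos] with ω hω
      exact tendsto_exp_atBot.comp (tendsto_id.atBot_mul_const hω)
  rw [integral_zero] at hlim
  exact hlim

lemma tendsto_mul_sub_cgf_atBot [IsProbabilityMeasure μ] (hX : AEMeasurable X μ)
    (hL : ∀ᵐ ω ∂μ, L < X ω) :
    Tendsto (fun θ => θ * L - cgf X μ θ) atBot atTop := by
  set Y : Ω → ℝ := fun ω => X ω - L
  have hY : AEMeasurable Y μ := hX.sub_const L
  have hY_pos : ∀ᵐ ω ∂μ, 0 < Y ω := by
    filter_upwards [hL] with ω hω
    exact sub_pos.2 hω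
  have hmgf_pos : ∀ᶠ θ in atBot, 0 < mgf Y μ θ := by
    filter_upwards [eventually_le_atBot 0] with θ hθ
    exact mgf_pos (integrable_exp_mul_of_nonpos hY (hY_pos.mono fun _ h => h.le) hθ)
  have hmgf : Tendsto (mgf Y μ) atBot (𝓝[>] 0) :=
    tendsto_nhdsWithin_iff.2 ⟨tendsto_mgf_atBot_of_pos hY hY_pos, hmgf_pos⟩
  have hcgf : ∀ᶠ θ in atBot, -log (mgf Y μ θ) = θ * L - cgf X μ θ := by
    filter_upwards [hmgf_pos] with θ hθ
    have hXY : mgf X μ θ = mgf Y μ θ * exp (θ * L) := by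
      simpa only [Y, sub_add_cancel] using mgf_add_const (X := Y) (μ := μ) (t := θ) L
    rw [cgf, hXY, log_mul hθ.ne' (exp_pos _).ne', log_exp]
    ring
  exact (tendsto_neg_atBot_atTop.comp (tendsto_log_nhdsGT_zero.comp hmgf)).congr' hcgf

lemma bddAbove_mul_sub_cgf [IsFiniteMeasure μ] {l : ℝ}
    (hint : ∀ θ ≤ 0, Integrable (fun ω => exp (θ * X ω)) μ)
    (hl : 0 < μ {ω | X ω ≤ l}) :
    BddAbove {y | ∃ θ ≤ (0 : ℝ), y = θ * l - cgf X μ θ} := by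
  have hp : 0 < μ.real {ω | X ω ≤ l} := ENNReal.toReal_pos hl.ne' (measure_ne_top _ _)
  refine ⟨-log (μ.real {ω | X ω ≤ l}), ?_⟩
  rintro _ ⟨θ, hθ, rfl⟩
  have hchernoff := log_le_log hp (measure_le_le_exp_cgf l hθ (hint θ hθ))
  rw [log_exp] at hchernoff
  linarith

end

theorem tendsto_rateFn_atTop_of_atomless_general
    {Ω : Type*} [MeasurableSpace Ω] (μ : Measure Ω) [IsProbabilityMeasure μ]
    (X : Ω → ℝ) (hX : Measurable X) (L : ℝ)
    (hbound : ∀ᵐ ω ∂μ, L ≤ X ω)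
    (hatomless : ∀ c : ℝ, μ {ω | X ω = c} = 0)
    (hsupport : ∀ l : ℝ, L < l → 0 < μ {ω | X ω < l})
    (A : ℝ → ℝ) (hA : ∀ θ, A θ = Real.log (∫ ω, Real.exp (θ * X ω) ∂μ))
    (Astar : ℝ → ℝ)
    (hAstar : ∀ l, Astar l = sSup {y | ∃ θ ≤ (0 : ℝ), y = θ * l - A θ}) :
    Filter.Tendsto Astar (nhdsWithin L (Set.Ioi L)) Filter.atTop := by
  obtain rfl : A = cgf X μ := funext hA
  have hXL : ∀ᵐ ω ∂μ, L < X ω := by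
    filter_upwards [hbound, measure_eq_zero_iff_ae_notMem.1 (hatomless L)] with ω hle hne
    exact hle.lt_of_ne (Ne.symm hne)
  rw [tendsto_atTop]
  intro M
  obtain ⟨θ, hθM, hθ⟩ :=
    (((tendsto_mul_sub_cgf_atBot hX.aemeasurable hXL).eventually_gt_atTop M).and
      (eventually_le_atBot 0)).exists
  have hcont : Tendsto (fun l => θ * l - cgf X μ θ) (𝓝[>] L) (𝓝 (θ * L - cgf X μ θ)) :=
    (Continuous.tendsto (by fun_prop) L).mono_left nhdsWithin_le_nhds
  filter_upwards [hcont.eventually (lt_mem_nhds hθM), self_mem_nhdsWithin] with l hlM hlL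
  have hbdd := bddAbove_mul_sub_cgf
    (fun θ hθ => integrable_exp_mul_of_nonpos hX.aemeasurable hbound hθ)
    ((hsupport l hlL).trans_le (measure_mono (Set.ofPred_subset_ofPred.2 fun _ h => h.le)))
  rw [hAstar]
  exact hlM.le.trans (le_csSup hbdd ⟨θ, hθ, rfl⟩)

/-- Let `X` be a real random variable with atomless law, supported in `[L, ∞)` with
`L` the infimum of the support, and with cumulant generating function
`A θ = log E[exp (θ X)]` finite for all `θ ≤ 0`. Then the Cramér rate function
`A* l = sup_{θ ≤ 0} (θ l - A θ)` tends to `∞` as `l ↓ L`. -/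
theorem tendsto_rateFn_atTop_of_atomless
    {Ω : Type*} [MeasurableSpace Ω] (μ : Measure Ω) [IsProbabilityMeasure μ]
    (X : Ω → ℝ) (hX : Measurable X) (L : ℝ)
    (hbound : ∀ᵐ ω ∂μ, L ≤ X ω)
    (hatomless : ∀ c : ℝ, μ {ω | X ω = c} = 0)
    (hsupport : ∀ l : ℝ, L < l → 0 < μ {ω | X ω < l})
    (hint : ∀ θ : ℝ, θ ≤ 0 → Integrable (fun ω => Real.exp (θ * X ω)) μ)
    (A : ℝ → ℝ) (hA : ∀ θ, A θ = Real.log (∫ ω, Real.exp (θ * X ω) ∂μ))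
    (Astar : ℝ → ℝ)
    (hAstar : ∀ l, Astar l = sSup {y | ∃ θ ≤ (0 : ℝ), y = θ * l - A θ}) :
    Filter.Tendsto Astar (nhdsWithin L (Set.Ioi L)) Filter.atTop :=
  tendsto_rateFn_atTop_of_atomless_general μ X hX L hbound hatomless hsupport A hA Astar hAstar
end

section
/- In a single-parameter exponential family parametrized by mean, for fixed μ₁ > μ₂, lim_{δ↓0} inf_{z < μ₂+δ} D(z,μ₁)/D(z,μ₂+δ) = inf_{z < μ₂} D(z,μ₁)/D(z,μ₂). -/
open Set Filter

private lemma antD (D : ℝ → ℝ → ℝ) (A'' : ℝ → ℝ) (hA : ∀ z, 0 ≤ A'' z)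
    (hderiv : ∀ m z, HasDerivAt (fun w => D w m) (-(A'' z) * (m - z)) z)
    (m : ℝ) : AntitoneOn (fun z => D z m) (Set.Iic m) := by
  apply antitoneOn_of_deriv_nonpos (convex_Iic m)
  · exact fun z _ => ((hderiv m z).differentiableAt.continuousAt).continuousWithinAt
  · exact fun z _ => ((hderiv m z).differentiableAt).differentiableWithinAt
  · intro z hz
    rw [interior_Iic] at hz
    rw [(hderiv m z).deriv]
    nlinarith [hA z, hz.out]

private lemma keyMono (D : ℝ → ℝ → ℝ) (A'' : ℝ → ℝ) (hA : ∀ z, 0 ≤ A'' z)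
    (hderiv : ∀ m z, HasDerivAt (fun w => D w m) (-(A'' z) * (m - z)) z)
    (μ₂ m b c : ℝ) (hc : ∀ w ≤ b, m - w ≤ c * (μ₂ - w)) :
    MonotoneOn (fun w => D w m - c * D w μ₂) (Set.Iic b) := by
  have hd : ∀ w, HasDerivAt (fun w => D w m - c * D w μ₂)
      (-(A'' w) * (m - w) - c * (-(A'' w) * (μ₂ - w))) w :=
    fun w => (hderiv m w).sub ((hderiv μ₂ w).const_mul c)
  apply monotoneOn_of_deriv_nonneg (convex_Iic b)
  · exact fun w _ => ((hd w).differentiableAt.continuousAt).continuousWithinAt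
  · exact fun w _ => ((hd w).differentiableAt).differentiableWithinAt
  · intro w hw
    rw [interior_Iic] at hw
    rw [(hd w).deriv]
    nlinarith [mul_nonneg (hA w) (sub_nonneg.mpr (hc w hw.out.le))]

private lemma ev_small {P : ℝ → Prop} {δ₀ : ℝ} (h : 0 < δ₀)
    (H : ∀ δ : ℝ, 0 < δ → δ < δ₀ → P δ) : ∀ᶠ δ in nhdsWithin 0 (Set.Ioi 0), P δ := by
  rw [eventually_nhdsWithin_iff]
  filter_upwards [Metric.ball_mem_nhds (0:ℝ) h] with δ hδ hδ'
  refine H δ hδ' ?_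
  have : |δ| < δ₀ := by simpa [Real.dist_eq] using hδ
  exact lt_of_abs_lt this

set_option maxHeartbeats 1600000 in
/-- In a single-parameter exponential family parametrized by its mean, with jointly
continuous KL divergence `D` satisfying `d/dz D(z,μ) = -A''(z)(μ - z)` with
`A'' ≥ 0`, `D μ μ = 0`, positivity off the diagonal, and monotonicity in the second
argument above the first: for fixed `μ₁ > μ₂`,
`lim_{δ ↓ 0} inf_{z < μ₂ + δ} D(z,μ₁)/D(z,μ₂+δ) = inf_{z < μ₂} D(z,μ₁)/D(z,μ₂)`. -/
theorem kl_ratio_inf_tendsto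
    (D : ℝ → ℝ → ℝ) (A'' : ℝ → ℝ) (hA : ∀ z, 0 ≤ A'' z)
    (hcont : Continuous fun p : ℝ × ℝ => D p.1 p.2)
    (hderiv : ∀ m z, HasDerivAt (fun w => D w m) (-(A'' z) * (m - z)) z)
    (hzero : ∀ m, D m m = 0)
    (hpos : ∀ z m, z ≠ m → 0 < D z m)
    (hmono2 : ∀ z m m', z ≤ m → m ≤ m' → D z m ≤ D z m')
    (μ₁ μ₂ : ℝ) (h12 : μ₂ < μ₁) :
    Filter.Tendsto
      (fun δ => sInf ((fun z => D z μ₁ / D z (μ₂ + δ)) '' Set.Iio (μ₂ + δ)))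
      (nhdsWithin 0 (Set.Ioi 0))
      (nhds (sInf ((fun z => D z μ₁ / D z μ₂) '' Set.Iio μ₂))) := by
  have hant : ∀ m, AntitoneOn (fun z => D z m) (Set.Iic m) := antD D A'' hA hderiv
  have hDnn : ∀ z m, 0 ≤ D z m := by
    intro z m
    rcases eq_or_ne z m with rfl | h
    · simp [hzero]
    · exact (hpos z m h).le
  have hSne : ∀ m : ℝ, ((fun z => D z μ₁ / D z m) '' Set.Iio m).Nonempty := by
    intro m
    exact ⟨_, ⟨m - 1, by norm_num, rfl⟩⟩
  have hSbdd : ∀ m : ℝ, BddBelow ((fun z => D z μ₁ / D z m) '' Set.Iio m) := by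
    intro m
    refine ⟨0, ?_⟩
    rintro y ⟨z, hz, rfl⟩
    exact div_nonneg (hDnn z μ₁) (hDnn z m)
  set L : ℝ := sInf ((fun z => D z μ₁ / D z μ₂) '' Set.Iio μ₂) with hLdef
  have hL1 : 1 ≤ L := by
    rw [hLdef]
    refine le_csInf (hSne μ₂) ?_
    rintro y ⟨z, hz, rfl⟩
    have h1 : 0 < D z μ₂ := hpos z μ₂ (ne_of_lt hz)
    have h2 : D z μ₂ ≤ D z μ₁ := hmono2 z μ₂ μ₁ (le_of_lt hz) h12.le
    rw [le_div_iff₀ h1]; linarith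
  have hLle : ∀ z < μ₂, L * D z μ₂ ≤ D z μ₁ := by
    intro z hz
    have h1 : 0 < D z μ₂ := hpos z μ₂ (ne_of_lt hz)
    have h2 : L ≤ D z μ₁ / D z μ₂ := by
      rw [hLdef]
      exact csInf_le (hSbdd μ₂) ⟨z, hz, rfl⟩
    calc L * D z μ₂ ≤ (D z μ₁ / D z μ₂) * D z μ₂ := mul_le_mul_of_nonneg_right h2 h1.le
      _ = D z μ₁ := by field_simp
  clear_value L
  obtain ⟨P, hPdef, hP⟩ : ∃ P : ℝ, P = D μ₂ μ₁ ∧ 0 < P :=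
    ⟨_, rfl, hpos _ _ (ne_of_lt h12)⟩
  have hL0 : (0:ℝ) < L + 1 := by linarith
  rw [tendsto_order]
  constructor
  · -- lower bound: ∀ b < L, eventually b < F δ
    intro b hb
    obtain ⟨ε, hε0, hε1, hεb⟩ : ∃ ε : ℝ, 0 < ε ∧ ε ≤ 1 ∧ ε ≤ L - b :=
      ⟨min (L - b) 1, lt_min (by linarith) one_pos, min_le_right _ _, min_le_left _ _⟩
    -- choose η via continuity of z ↦ D z μ₂ at μ₂
    have c1 : Continuous fun z : ℝ => D z μ₂ :=
      hcont.comp (continuous_id.prodMk continuous_const)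
    obtain ⟨η, hη0, hD0small⟩ : ∃ η : ℝ, 0 < η ∧ D (μ₂ - η) μ₂ ≤ P / (4 * (L + 1)) := by
      have hQ : 0 < P / (4 * (L + 1)) := by positivity
      obtain ⟨d, hd0, hd⟩ := Metric.continuousAt_iff.mp (c1.continuousAt (x := μ₂)) _ hQ
      refine ⟨d / 2, by positivity, ?_⟩
      have h1 : dist (μ₂ - d / 2) μ₂ < d := by
        rw [Real.dist_eq, abs_of_nonpos (by linarith)]
        linarith
      have h2 := hd h1
      rw [Real.dist_eq, hzero, sub_zero] at h2
      exact (le_abs_self _).trans h2.le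
    obtain ⟨D₀, hD₀def, hD₀pos⟩ : ∃ D₀ : ℝ, D₀ = D (μ₂ - η) μ₂ ∧ 0 < D₀ :=
      ⟨_, rfl, hpos _ _ (ne_of_lt (by linarith))⟩
    have hD₀small : D₀ ≤ P / (4 * (L + 1)) := hD₀def ▸ hD0small
    -- continuity of δ ↦ D (μ₂+δ) μ₁ at 0
    have c2 : Continuous fun δ : ℝ => D (μ₂ + δ) μ₁ :=
      hcont.comp ((continuous_const.add continuous_id).prodMk continuous_const)
    obtain ⟨δ₁, hδ₁0, hδ₁⟩ : ∃ δ₁ : ℝ, 0 < δ₁ ∧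
        ∀ δ : ℝ, 0 < δ → δ < δ₁ → P / 2 ≤ D (μ₂ + δ) μ₁ := by
      obtain ⟨d, hd0, hd⟩ := Metric.continuousAt_iff.mp (c2.continuousAt (x := 0)) _ (half_pos hP)
      refine ⟨d, hd0, fun δ h1 h2 => ?_⟩
      have h3 := hd (x := δ) (by rw [Real.dist_eq, sub_zero, abs_of_pos h1]; exact h2)
      rw [Real.dist_eq, add_zero, ← hPdef] at h3
      have := (abs_lt.mp h3).1
      linarith
    -- continuity of δ ↦ D (μ₂-η) (μ₂+δ) at 0
    have c3 : Continuous fun δ : ℝ => D (μ₂ - η) (μ₂ + δ) :=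
      hcont.comp (continuous_const.prodMk (continuous_const.add continuous_id))
    obtain ⟨δ₂, hδ₂0, hδ₂⟩ : ∃ δ₂ : ℝ, 0 < δ₂ ∧
        ∀ δ : ℝ, 0 < δ → δ < δ₂ →
          D (μ₂ - η) (μ₂ + δ) ≤ P / (2 * (L + 1)) ∧
          D (μ₂ - η) (μ₂ + δ) - D₀ ≤ D₀ * ε / (8 * (L + 1)) := by
      have he₃ : 0 < min (P / (4 * (L + 1))) (D₀ * ε / (8 * (L + 1))) := by positivity
      obtain ⟨d, hd0, hd⟩ := Metric.continuousAt_iff.mp (c3.continuousAt (x := 0)) _ he₃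
      refine ⟨d, hd0, fun δ h1 h2 => ?_⟩
      have h3 := hd (x := δ) (by rw [Real.dist_eq, sub_zero, abs_of_pos h1]; exact h2)
      rw [Real.dist_eq, add_zero, ← hD₀def] at h3
      have h4 := abs_lt.mp h3
      constructor
      · have h5 := lt_of_lt_of_le h4.2 (min_le_left _ _)
        have heq : P / (4 * (L + 1)) + P / (4 * (L + 1)) = P / (2 * (L + 1)) := by
          field_simp; ring
        linarith
      · have h5 := lt_of_lt_of_le h4.2 (min_le_right _ _)
        linarith
    obtain ⟨δ₀, hδ₀0, hδ₀le⟩ : ∃ δ₀ : ℝ, 0 < δ₀ ∧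
        ∀ δ : ℝ, 0 < δ → δ < δ₀ →
          δ < δ₁ ∧ δ < δ₂ ∧ δ < μ₁ - μ₂ ∧ δ ≤ η * ε / (8 * (L + 1)) := by
      refine ⟨min δ₁ (min δ₂ (min (μ₁ - μ₂) (η * ε / (8 * (L + 1))))),
        lt_min hδ₁0 (lt_min hδ₂0 (lt_min (by linarith) (by positivity))), fun δ h1 h2 => ?_⟩
      refine ⟨lt_of_lt_of_le h2 (min_le_left _ _),
        lt_of_lt_of_le h2 ((min_le_right _ _).trans (min_le_left _ _)),
        lt_of_lt_of_le h2 ((min_le_right _ _).trans ((min_le_right _ _).trans (min_le_left _ _))),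
        (lt_of_lt_of_le h2
          ((min_le_right _ _).trans ((min_le_right _ _).trans (min_le_right _ _)))).le⟩
    refine ev_small hδ₀0 ?_
    intro δ hδ0 hδδ₀
    obtain ⟨hδa, hδb, hδμ, hδη⟩ := hδ₀le δ hδ0 hδδ₀
    have hnum : P / 2 ≤ D (μ₂ + δ) μ₁ := hδ₁ δ hδ0 hδa
    obtain ⟨hden1, hden2⟩ := hδ₂ δ hδ0 hδb
    have hm2 : μ₂ < μ₂ + δ := by linarith
    have hm1 : μ₂ + δ ≤ μ₁ := by linarith
    have hkey : ∀ y ∈ (fun z => D z μ₁ / D z (μ₂ + δ)) '' Set.Iio (μ₂ + δ), L - ε / 2 ≤ y := by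
      rintro y ⟨z, hz, rfl⟩
      have hzm : z < μ₂ + δ := hz
      have hdz : 0 < D z (μ₂ + δ) := hpos z (μ₂ + δ) (ne_of_lt hzm)
      rw [le_div_iff₀ hdz]
      by_cases hzfar : z ≤ μ₂ - η
      · -- far region
        have hzμ₂ : z < μ₂ := by linarith
        have hDz2 : 0 < D z μ₂ := hpos z μ₂ (ne_of_lt hzμ₂)
        have hLz : L * D z μ₂ ≤ D z μ₁ := hLle z hzμ₂
        have hD₀le : D₀ ≤ D z μ₂ := by
          rw [hD₀def]
          exact hant μ₂ (Set.mem_Iic.mpr hzμ₂.le) (Set.mem_Iic.mpr (by linarith)) hzfar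
        have hmono := keyMono D A'' hA hderiv μ₂ (μ₂ + δ) (μ₂ - η) (1 + δ / η) (by
          intro w hw
          have h1 : η ≤ μ₂ - w := by linarith
          have h2 : δ / η * η ≤ δ / η * (μ₂ - w) :=
            mul_le_mul_of_nonneg_left h1 (div_pos hδ0 hη0).le
          have h3 : δ / η * η = δ := div_mul_cancel₀ δ (ne_of_gt hη0)
          nlinarith)
        have hkey2 : D z (μ₂ + δ) - (1 + δ / η) * D z μ₂ ≤
            D (μ₂ - η) (μ₂ + δ) - (1 + δ / η) * D₀ := by
          have := hmono (Set.mem_Iic.mpr hzfar) (Set.self_mem_Iic) hzfar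
          rw [hD₀def]
          simpa using this
        have hc1 : (0:ℝ) ≤ δ / η := (div_pos hδ0 hη0).le
        have hK : D (μ₂ - η) (μ₂ + δ) - (1 + δ / η) * D₀ ≤ D₀ * ε / (8 * (L + 1)) := by
          nlinarith [hden2, hD₀pos]
        have hq : δ / η ≤ ε / (8 * (L + 1)) := by
          rw [div_le_div_iff₀ hη0 (by positivity)]
          calc δ * (8 * (L + 1)) ≤ η * ε / (8 * (L + 1)) * (8 * (L + 1)) :=
                mul_le_mul_of_nonneg_right hδη (by positivity)
            _ = ε * η := by field_simp
        obtain ⟨q, hqdef, hqpos, hq8⟩ : ∃ q : ℝ, q = ε / (8 * (L + 1)) ∧ 0 < q ∧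
            q * (8 * (L + 1)) = ε := ⟨_, rfl, by positivity, by field_simp⟩
        rw [← hqdef] at hq
        have hbound : D z (μ₂ + δ) ≤ (1 + 2 * q) * D z μ₂ := by
          have h1 : D z (μ₂ + δ) ≤ (1 + δ / η) * D z μ₂ + D₀ * ε / (8 * (L + 1)) := by
            linarith
          have h2 : D₀ * ε / (8 * (L + 1)) ≤ q * D z μ₂ := by
            have h2' : D₀ * ε / (8 * (L + 1)) = q * D₀ := by
              rw [hqdef]; field_simp
            rw [h2']
            exact mul_le_mul_of_nonneg_left hD₀le hqpos.le
          have h3 : (1 + δ / η) * D z μ₂ ≤ (1 + q) * D z μ₂ :=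
            mul_le_mul_of_nonneg_right (by linarith) hDz2.le
          nlinarith
        have hscal : (L - ε / 2) * (1 + 2 * q) ≤ L := by
          nlinarith [hq8, hqpos.le, hε0.le, mul_nonneg hε0.le hqpos.le, hL1]
        have hpos2 : (0:ℝ) < L - ε / 2 := by linarith
        calc (L - ε / 2) * D z (μ₂ + δ) ≤ (L - ε / 2) * ((1 + 2 * q) * D z μ₂) :=
              mul_le_mul_of_nonneg_left hbound hpos2.le
          _ = ((L - ε / 2) * (1 + 2 * q)) * D z μ₂ := by ring
          _ ≤ L * D z μ₂ := mul_le_mul_of_nonneg_right hscal hDz2.le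
          _ ≤ D z μ₁ := hLz
      · -- near region: μ₂ - η < z < μ₂ + δ
        push_neg at hzfar
        have hnum' : D (μ₂ + δ) μ₁ ≤ D z μ₁ :=
          hant μ₁ (Set.mem_Iic.mpr (by linarith)) (Set.mem_Iic.mpr hm1) hzm.le
        have hden' : D z (μ₂ + δ) ≤ D (μ₂ - η) (μ₂ + δ) :=
          hant (μ₂ + δ) (Set.mem_Iic.mpr (by linarith)) (Set.mem_Iic.mpr hzm.le) hzfar.le
        have hfield : (L + 1) * (P / (2 * (L + 1))) = P / 2 := by
          field_simp
        have h1 : (L - ε / 2) * D z (μ₂ + δ) ≤ (L + 1) * (P / (2 * (L + 1))) :=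
          mul_le_mul (by linarith) (hden'.trans hden1) (hDnn z (μ₂ + δ)) (by linarith)
        rw [hfield] at h1
        linarith
    have hfin : L - ε / 2 ≤ sInf ((fun z => D z μ₁ / D z (μ₂ + δ)) '' Set.Iio (μ₂ + δ)) :=
      le_csInf (hSne (μ₂ + δ)) hkey
    calc b < L - ε / 2 := by linarith
      _ ≤ _ := hfin
  · -- upper bound: ∀ b > L, eventually F δ < b
    intro b hb
    filter_upwards [self_mem_nhdsWithin] with δ (hδ : δ ∈ Set.Ioi (0:ℝ))
    have hδ0 : (0:ℝ) < δ := hδ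
    have hFle : sInf ((fun z => D z μ₁ / D z (μ₂ + δ)) '' Set.Iio (μ₂ + δ)) ≤ L := by
      rw [hLdef]
      refine le_csInf (hSne μ₂) ?_
      rintro y ⟨z, hz, rfl⟩
      have hz' : z < μ₂ + δ := by have := hz.out; linarith
      have h1 : sInf ((fun z => D z μ₁ / D z (μ₂ + δ)) '' Set.Iio (μ₂ + δ)) ≤
          D z μ₁ / D z (μ₂ + δ) := csInf_le (hSbdd (μ₂ + δ)) ⟨z, hz', rfl⟩
      have h2 : D z μ₁ / D z (μ₂ + δ) ≤ D z μ₁ / D z μ₂ :=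
        div_le_div_of_nonneg_left (hDnn z μ₁) (hpos z μ₂ (ne_of_lt hz))
          (hmono2 z μ₂ (μ₂ + δ) (le_of_lt hz) (by linarith))
      linarith
    exact lt_of_le_of_lt hFle hb
end
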